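/- Let X be a finite set and let A be an abelian subgroup of Sym(X). Then A is the automorphism group of a coloured directed graph on X (A ∈ DGR) if and only if A is 2-orbit-closed. -/
import Mathlib


/-- The orbit of a point `x` under a set `G` of permutations of `X`. -/
def orbitOf {X : Type*} (G : Set (Equiv.Perm X)) (x : X) : Set X :=
  {y | ∃ a ∈ G, a x = y}

/-- A permutation `σ` is 2-orbit-compatible with `G` if for every pair of orbits
`O` and `Q` of `G` there is an element of `G` agreeing with `σ` on `O ∪ Q`. -/
def TwoOrbitCompatible {X : Type*} (G : Set (Equiv.Perm X)) (σ : Equiv.Perm X) : Prop :=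
  ∀ x y : X, ∃ a ∈ G, ∀ z ∈ orbitOf G x ∪ orbitOf G y, σ z = a z

/-- A subgroup `A ≤ Sym(X)` is 2-orbit-closed if every permutation that is
2-orbit-compatible with `A` belongs to `A`. -/
def TwoOrbitClosed {X : Type*} (A : Subgroup (Equiv.Perm X)) : Prop :=
  ∀ σ : Equiv.Perm X, TwoOrbitCompatible (A : Set (Equiv.Perm X)) σ → σ ∈ A

/-- `A` is precisely the automorphism group of the `k`-coloured digraph `γ` on `X`. -/
def IsColDigraphAutGroup {X : Type*} {k : ℕ} (γ : X → X → Fin k)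
    (A : Subgroup (Equiv.Perm X)) : Prop :=
  ∀ σ : Equiv.Perm X, σ ∈ A ↔ ∀ x y : X, x ≠ y → γ (σ x) (σ y) = γ x y

/-- `A ∈ DGR`: `A` is the automorphism group of some coloured digraph on `X`. -/
def InDGR {X : Type*} (A : Subgroup (Equiv.Perm X)) : Prop :=
  ∃ k : ℕ, 1 ≤ k ∧ ∃ γ : X → X → Fin k, IsColDigraphAutGroup γ A

/-- `A ∈ DGR(4)`: `A` is the automorphism group of some 4-coloured digraph on `X`. -/
def InDGR4 {X : Type*} (A : Subgroup (Equiv.Perm X)) : Prop :=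
  ∃ γ : X → X → Fin 4, IsColDigraphAutGroup γ A

/-- In an abelian subgroup, two elements agreeing at `x` agree on the orbit of `x`. -/
lemma abelian_agree {X : Type*} (A : Subgroup (Equiv.Perm X))
    (hab : ∀ a ∈ A, ∀ b ∈ A, a * b = b * a)
    {a c : Equiv.Perm X} (ha : a ∈ A) (hc : c ∈ A) {x : X} (hax : a x = c x)
    {b : Equiv.Perm X} (hb : b ∈ A) : a (b x) = c (b x) := by
  have h1 : (a * b) x = (b * a) x := by rw [hab a ha b hb]
  have h2 : (c * b) x = (b * c) x := by rw [hab c hc b hb]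
  simp only [Equiv.Perm.mul_apply] at h1 h2
  rw [h1, hax, ← h2]

/-- An abelian subgroup `A ≤ Sym(X)` is the automorphism group of a coloured directed
graph on `X` iff `A` is 2-orbit-closed. -/
theorem statement2 (X : Type*) [Fintype X] (A : Subgroup (Equiv.Perm X))
    (hab : ∀ a ∈ A, ∀ b ∈ A, a * b = b * a) :
    InDGR A ↔ TwoOrbitClosed A := by
  classical
  constructor
  · rintro ⟨k, hk, γ, hγ⟩ σ hσ
    rw [hγ]
    intro x y hxy
    obtain ⟨a, haA, ha⟩ := hσ x y
    have hx : σ x = a x := ha x (Or.inl ⟨1, A.one_mem, rfl⟩)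
    have hy : σ y = a y := ha y (Or.inr ⟨1, A.one_mem, rfl⟩)
    rw [hx, hy]
    exact (hγ a).mp haA x y hxy
  · intro hcl
    -- orbit equivalence on pairs
    let s : Setoid (X × X) :=
      ⟨fun p q => ∃ a ∈ A, a p.1 = q.1 ∧ a p.2 = q.2, by
        constructor
        · intro p; exact ⟨1, A.one_mem, rfl, rfl⟩
        · rintro p q ⟨a, haA, h1, h2⟩
          exact ⟨a⁻¹, A.inv_mem haA, by simp [← h1], by simp [← h2]⟩
        · rintro p q r ⟨a, haA, h1, h2⟩ ⟨b, hbA, h3, h4⟩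
          exact ⟨b * a, A.mul_mem hbA haA, by simp [Equiv.Perm.mul_apply, h1, h3],
            by simp [Equiv.Perm.mul_apply, h2, h4]⟩⟩
    haveI : Fintype (Quotient s) := Quotient.fintype s
    let e : Quotient s ≃ Fin (Fintype.card (Quotient s)) := Fintype.equivFin _
    refine ⟨Fintype.card (Quotient s) + 1, Nat.succ_le_succ (Nat.zero_le _),
      fun x y => Fin.castSucc (e (Quotient.mk s (x, y))), ?_⟩
    intro σ
    constructor
    · intro hσ x y _
      have : Quotient.mk s (σ x, σ y) = Quotient.mk s (x, y) :=
        Quotient.sound ⟨σ⁻¹, A.inv_mem hσ, by simp, by simp⟩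
      simp [this]
    · intro hpres
      -- pairwise agreement on distinct pairs
      have hpair : ∀ x y : X, x ≠ y → ∃ a ∈ A, σ x = a x ∧ σ y = a y := by
        intro x y hxy
        have h := hpres x y hxy
        have h2 : Quotient.mk s (σ x, σ y) = Quotient.mk s (x, y) := by
          have := Fin.castSucc_injective _ h
          exact e.injective this
        obtain ⟨a, haA, h1, h2⟩ := Quotient.exact h2
        exact ⟨a⁻¹, A.inv_mem haA, Equiv.Perm.eq_inv_iff_eq.mpr h1,
          Equiv.Perm.eq_inv_iff_eq.mpr h2⟩
      -- extension to orbits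
      have horb : ∀ (c : Equiv.Perm X), c ∈ A → ∀ x : X, σ x = c x →
          ∀ z ∈ orbitOf (A : Set (Equiv.Perm X)) x, σ z = c z := by
        intro c hcA x hcx z hz
        obtain ⟨b, hbA, hbx⟩ := hz
        by_cases hzx : z = x
        · rw [hzx]; exact hcx
        · obtain ⟨d, hdA, hd1, hd2⟩ := hpair x z (Ne.symm hzx)
          have hdc : d x = c x := by rw [← hd1, hcx]
          have := abelian_agree A hab hdA hcA hdc hbA
          rw [hbx] at this
          rw [hd2, this]
      apply hcl
      intro x y
      -- find one element of A agreeing with σ at x and y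
      have key : ∃ c ∈ A, σ x = c x ∧ σ y = c y := by
        by_cases hxy : x = y
        · subst hxy
          by_cases hw : ∃ w : X, w ≠ x
          · obtain ⟨w, hw⟩ := hw
            obtain ⟨c, hcA, h1, _⟩ := hpair x w (Ne.symm hw)
            exact ⟨c, hcA, h1, h1⟩
          · push_neg at hw
            exact ⟨1, A.one_mem, (hw (σ x)).trans (hw ((1 : Equiv.Perm X) x)).symm,
              (hw (σ x)).trans (hw ((1 : Equiv.Perm X) x)).symm⟩
        · obtain ⟨c, hcA, h1, h2⟩ := hpair x y hxy
          exact ⟨c, hcA, h1, h2⟩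
      obtain ⟨c, hcA, h1, h2⟩ := key
      refine ⟨c, hcA, ?_⟩
      rintro z (hz | hz)
      · exact horb c hcA x h1 z hz
      · exact horb c hcA y h2 z hz
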